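/- For every subgraph K ∈ S_f, the composite map φ := φ_{e_m} ∘ ⋯ ∘ φ_{e_1} satisfies: φ(K) is an orientation of G admitting a d-flow (so φ maps S_f into O_f) and A(φ(K)) = A(K). -/

import Mathlib

open Finset

section Defs

variable {V : Type*}

/-- Reversal of a directed edge. -/
def drev (e : V × V) : V × V := (e.2, e.1)

/-- `K` is a subgraph of the (symmetric) edge set `E`: it contains either both or
neither of `e` and `drev e` for every `e ∈ E`. -/
def IsSubgraph [DecidableEq V] (E K : Finset (V × V)) : Prop :=
  K ⊆ E ∧ ∀ e ∈ E, (e ∈ K ↔ drev e ∈ K)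

/-- `L` is an orientation of the (symmetric) edge set `E`: it contains exactly one of
`e` and `drev e` for every `e ∈ E`. -/
def IsOrientation [DecidableEq V] (E L : Finset (V × V)) : Prop :=
  L ⊆ E ∧ ∀ e ∈ E, (e ∈ L ↔ drev e ∉ L)

variable [Fintype V] [DecidableEq V]

/-- `f` is a `d`-flow on the directed subgraph `D` of the graph with edge set `E`. -/
def IsFlow (E D : Finset (V × V)) (d : V → ℤ) (f : V × V → ℝ) : Prop :=
  (∀ e ∈ E, 0 ≤ f e ∧ f e ≤ 1) ∧
  (∀ e, e ∉ D → f e = 0) ∧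
  ∀ u : V,
    ((Finset.univ.filter (fun v : V => (u, v) ∈ E)).sum fun v => f (u, v)) -
      ((Finset.univ.filter (fun v : V => (v, u) ∈ E)).sum fun v => f (v, u)) = (d u : ℝ)

/-- A `d`-flow exists on `D`. -/
def AdmitsFlow (E D : Finset (V × V)) (d : V → ℤ) : Prop :=
  ∃ f : V × V → ℝ, IsFlow E D d f

/-- The `w`-cost of a flow `f`. -/
def flowCost (E : Finset (V × V)) (w : V × V → ℝ) (f : V × V → ℝ) : ℝ :=
  ∑ e ∈ E, w e * f e

/-- `f` is a min-cost `d`-flow on `D`. -/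
def IsMinCostFlow (E D : Finset (V × V)) (d : V → ℤ) (w : V × V → ℝ)
    (f : V × V → ℝ) : Prop :=
  IsFlow E D d f ∧ ∀ g : V × V → ℝ, IsFlow E D d g → flowCost E w f ≤ flowCost E w g

/-- The `{0,1}`-valued function determined by a set of edges. -/
def ind (S : Finset (V × V)) : V × V → ℝ := fun e => if e ∈ S then 1 else 0

/-- `A` assigns to every flow-admitting `D ⊆ E` the (edge set of the) unique,
`{0,1}`-valued min-cost `d`-flow on `D`. -/
def GoodA (E : Finset (V × V)) (d : V → ℤ) (w : V × V → ℝ)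
    (A : Finset (V × V) → Finset (V × V)) : Prop :=
  ∀ D : Finset (V × V), D ⊆ E → AdmitsFlow E D d →
    IsMinCostFlow E D d w (ind (A D)) ∧
    ∀ f : V × V → ℝ, IsMinCostFlow E D d w f → f = ind (A D)

/-- `A(D) = A(D')`: both `D` and `D'` admit a `d`-flow and their unique min-cost
`d`-flows coincide.  (If one of them admits no `d`-flow this is false.) -/
def AEq (E : Finset (V × V)) (d : V → ℤ) (A : Finset (V × V) → Finset (V × V))
    (D D' : Finset (V × V)) : Prop :=
  AdmitsFlow E D d ∧ AdmitsFlow E D' d ∧ A D = A D'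

/-- `D ⊕ e := (D ∪ {e}) \ {drev e}`. -/
def oplus (D : Finset (V × V)) (e : V × V) : Finset (V × V) := insert e D \ {drev e}

/-- `D + e := D ∪ {e, drev e}`. -/
def padd (D : Finset (V × V)) (e : V × V) : Finset (V × V) := D ∪ {e, drev e}

/-- `D − e := D \ {e, drev e}`. -/
def psub (D : Finset (V × V)) (e : V × V) : Finset (V × V) := D \ {e, drev e}

/-- The representative of `{e, drev e}` lying in the reference orientation `E'`. -/
def chi (E' : Finset (V × V)) (e : V × V) : V × V := if e ∈ E' then e else drev e

/-- The map `φ_e`. -/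
noncomputable def phiE (E : Finset (V × V)) (d : V → ℤ)
    (A : Finset (V × V) → Finset (V × V)) (E' : Finset (V × V))
    (e : V × V) (D : Finset (V × V)) : Finset (V × V) := by
  classical
  exact
    if ¬ AEq E d A D (oplus D e) then oplus D (drev e)
    else if ¬ AEq E d A D (oplus D (drev e)) then oplus D e
    else if e ∈ D then oplus D (chi E' e) else oplus D (drev (chi E' e))

/-- The map `ψ_e`. -/
noncomputable def psiE (E : Finset (V × V)) (d : V → ℤ)
    (A : Finset (V × V) → Finset (V × V)) (E' : Finset (V × V))
    (e : V × V) (D : Finset (V × V)) : Finset (V × V) := by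
  classical
  exact
    if ¬ AEq E d A D (padd D e) then psub D e
    else if ¬ AEq E d A D (psub D e) then padd D e
    else if chi E' e ∈ D then padd D e else psub D e

end Defs

/-!
Each `φ_e` replaces `D` by `D ⊕ e` or `D ⊕ drev e`, so once every undirected edge has been
visited the result is an orientation. The content is that `A` is preserved: for `D` admitting a
flow, `A (D ⊕ e) = A D` or `A (D ⊕ drev e) = A D`. If `D` contains exactly one of `e`, `drev e`,
one of the two sets is `D` itself. If `D` contains both, the min-cost flow `A D` cannot use both,
since cancelling the 2-cycle `e, drev e` would make it cheaper; so it survives deleting the one it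
does not use. If `D` contains neither and both insertions change `A`, the two new min-cost flows
are strictly cheaper than `A D` and use `e` resp. `drev e`; their average runs through the 2-cycle
with weight `1/2`, and cancelling it leaves a flow on `D` cheaper than `A D`.
-/

section Edges

variable {V : Type*}

@[simp] lemma drev_drev (e : V × V) : drev (drev e) = e := rfl

@[simp] lemma drev_inj {a b : V × V} : drev a = drev b ↔ a = b :=
  ⟨fun h => by simpa using congrArg drev h, fun h => h ▸ rfl⟩

@[simp] lemma drev_mk (a b : V) : drev (a, b) = (b, a) := rfl

lemma drev_eq_iff {a b : V × V} : drev a = b ↔ a = drev b :=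
  ⟨fun h => h ▸ rfl, fun h => h ▸ rfl⟩

lemma ne_drev_of_fst_ne {e : V × V} (h : e.1 ≠ e.2) : e ≠ drev e :=
  fun h' => h (congrArg Prod.fst h')

def OrientsPair (D : Finset (V × V)) (e : V × V) : Prop := e ∈ D ↔ drev e ∉ D

lemma orientsPair_drev {D : Finset (V × V)} {e : V × V} :
    OrientsPair D (drev e) ↔ OrientsPair D e := by
  simp only [OrientsPair, drev_drev]
  tauto

variable [DecidableEq V] {D : Finset (V × V)} {e x : V × V}

lemma mem_oplus : x ∈ oplus D e ↔ (x = e ∨ x ∈ D) ∧ x ≠ drev e := by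
  simp [oplus]

lemma oplus_subset {E : Finset (V × V)} (he : e ∈ E) (hD : D ⊆ E) : oplus D e ⊆ E := by
  intro x hx
  rcases (mem_oplus.mp hx).1 with rfl | hxD
  exacts [he, hD hxD]

lemma oplus_subset_of_mem (he : e ∈ D) : oplus D e ⊆ D := by
  intro x hx
  rcases (mem_oplus.mp hx).1 with rfl | hxD
  exacts [he, hxD]

lemma subset_oplus (hre : drev e ∉ D) : D ⊆ oplus D e :=
  fun x hx => mem_oplus.mpr ⟨Or.inr hx, by rintro rfl; exact hre hx⟩

lemma drev_notMem_oplus : drev e ∉ oplus D e := fun h => (mem_oplus.mp h).2 rfl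

lemma oplus_eq_self (he : e ∈ D) (hre : drev e ∉ D) : oplus D e = D := by
  ext x
  rw [mem_oplus]
  constructor
  · rintro ⟨rfl | hx, -⟩ <;> assumption
  · rintro hx
    exact ⟨Or.inr hx, by rintro rfl; exact hre hx⟩

lemma orientsPair_oplus_self (hne : e ≠ drev e) : OrientsPair (oplus D e) e := by
  simp [OrientsPair, mem_oplus, hne]

lemma OrientsPair.oplus (hx : OrientsPair D x) (hne : e ≠ drev e) :
    OrientsPair (oplus D e) x := by
  by_cases hxe : x = e
  · subst hxe
    exact orientsPair_oplus_self hne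
  by_cases hxre : x = drev e
  · subst hxre
    exact orientsPair_drev.mpr (orientsPair_oplus_self hne)
  have hdx : drev x ≠ drev e := by simpa using hxe
  have hdx' : drev x ≠ e := by rintro rfl; simp at hxre
  simpa [OrientsPair, mem_oplus, hxe, hxre, hdx, hdx'] using hx

end Edges

section Flows

variable {V : Type*} [Fintype V] [DecidableEq V] {E D D' : Finset (V × V)} {d : V → ℤ}
  {f g : V × V → ℝ} {e : V × V}

def netOut (E : Finset (V × V)) (u : V) : (V × V → ℝ) →ₗ[ℝ] ℝ :=
  ∑ v ∈ univ.filter (fun v => (u, v) ∈ E), LinearMap.proj (u, v) -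
    ∑ v ∈ univ.filter (fun v => (v, u) ∈ E), LinearMap.proj (v, u)

lemma netOut_apply (u : V) (f : V × V → ℝ) :
    netOut E u f = (∑ v ∈ univ.filter (fun v => (u, v) ∈ E), f (u, v)) -
      ∑ v ∈ univ.filter (fun v => (v, u) ∈ E), f (v, u) := by
  simp [netOut]

lemma netOut_eq_zero_of_symm (hE : ∀ e, e ∈ E ↔ drev e ∈ E) (hg : ∀ x, g (drev x) = g x)
    (u : V) : netOut E u g = 0 := by
  have hfilter : univ.filter (fun v => (u, v) ∈ E) = univ.filter (fun v => (v, u) ∈ E) := by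
    ext v
    simpa using hE (u, v)
  rw [netOut_apply, hfilter, sub_eq_zero]
  exact sum_congr rfl fun v _ => hg (v, u)

lemma isFlow_iff : IsFlow E D d f ↔
    (∀ e ∈ E, 0 ≤ f e ∧ f e ≤ 1) ∧ (∀ e ∉ D, f e = 0) ∧
      ∀ u, netOut E u f = d u := by
  simp only [IsFlow, netOut_apply]

lemma IsFlow.netOut_eq (hf : IsFlow E D d f) (u : V) : netOut E u f = d u :=
  (isFlow_iff.mp hf).2.2 u

lemma IsFlow.restrict (hf : IsFlow E D d f) (h : ∀ x ∈ D, x ∉ D' → f x = 0) :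
    IsFlow E D' d f := by
  refine ⟨hf.1, fun x hx => ?_, hf.2.2⟩
  by_cases hxD : x ∈ D
  exacts [h x hxD hx, hf.2.1 x hxD]

lemma IsFlow.mono (hf : IsFlow E D d f) (h : D ⊆ D') : IsFlow E D' d f :=
  hf.restrict fun _ hx hx' => absurd (h hx) hx'

lemma AdmitsFlow.mono (hD : AdmitsFlow E D d) (h : D ⊆ D') : AdmitsFlow E D' d :=
  let ⟨f, hf⟩ := hD; ⟨f, hf.mono h⟩

lemma IsFlow.subset_of_ind {S : Finset (V × V)} (hf : IsFlow E D d (ind S)) : S ⊆ D := by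
  intro x hx
  by_contra hxD
  simpa [ind, hx] using hf.2.1 x hxD

lemma IsFlow.convex_combination (hf : IsFlow E D d f) (hg : IsFlow E D' d g) {a b : ℝ}
    (ha : 0 ≤ a) (hb : 0 ≤ b) (hab : a + b = 1) :
    IsFlow E (D ∪ D') d (a • f + b • g) := by
  refine isFlow_iff.mpr ⟨fun x hx => ?_, fun x hx => ?_, fun u => ?_⟩
  · obtain ⟨hf0, hf1⟩ := hf.1 x hx
    obtain ⟨hg0, hg1⟩ := hg.1 x hx
    simp only [Pi.add_apply, Pi.smul_apply, smul_eq_mul]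
    constructor <;> nlinarith
  · rw [mem_union, not_or] at hx
    simp [hf.2.1 x hx.1, hg.2.1 x hx.2]
  · rw [map_add, map_smul, map_smul, hf.netOut_eq, hg.netOut_eq, smul_eq_mul, smul_eq_mul,
      ← add_mul, hab, one_mul]

lemma IsFlow.sub_pair (hE : ∀ e, e ∈ E ↔ drev e ∈ E) (hf : IsFlow E D d f) {c : ℝ}
    (he : f e = c) (hre : f (drev e) = c) :
    IsFlow E (psub D e) d (f - c • ind {e, drev e}) := by
  have hpair : ∀ x ∈ ({e, drev e} : Finset (V × V)), f x - c = 0 := by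
    simp only [mem_insert, mem_singleton]
    rintro x (rfl | rfl) <;> simp [he, hre]
  refine isFlow_iff.mpr ⟨fun x hx => ?_, fun x hx => ?_, fun u => ?_⟩
  · by_cases hx' : x ∈ ({e, drev e} : Finset (V × V))
    · simp [ind, hx', hpair x hx']
    · simpa [ind, hx'] using hf.1 x hx
  · by_cases hx' : x ∈ ({e, drev e} : Finset (V × V))
    · simp [ind, hx', hpair x hx']
    · have hxD : x ∉ D := fun hxD => hx (mem_sdiff.mpr ⟨hxD, hx'⟩)
      simp [ind, hx', hf.2.1 x hxD]
  · have hsymm : ∀ x, ind {e, drev e} (drev x) = ind {e, drev e} x := by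
      intro x
      simp only [ind, mem_insert, mem_singleton, drev_eq_iff, drev_drev, or_comm]
    rw [map_sub, map_smul, netOut_eq_zero_of_symm hE hsymm, smul_zero, sub_zero, hf.netOut_eq]

end Flows

section Cost

variable {V : Type*} {E : Finset (V × V)} {w : V × V → ℝ} {f g : V × V → ℝ}

lemma flowCost_add : flowCost E w (f + g) = flowCost E w f + flowCost E w g := by
  simp [flowCost, mul_add, sum_add_distrib]

lemma flowCost_smul (c : ℝ) : flowCost E w (c • f) = c * flowCost E w f := by
  simp [flowCost, mul_sum, mul_left_comm]

lemma flowCost_sub : flowCost E w (f - g) = flowCost E w f - flowCost E w g := by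
  simp [flowCost, mul_sub, sum_sub_distrib]

variable [DecidableEq V] {e : V × V}

lemma flowCost_ind_pair (he : e ∈ E) (hre : drev e ∈ E) (hne : e ≠ drev e) :
    flowCost E w (ind {e, drev e}) = w e + w (drev e) := by
  have hpair : E ∩ {e, drev e} = {e, drev e} :=
    inter_eq_right.mpr (insert_subset he (singleton_subset_iff.mpr hre))
  simp only [flowCost, ind, mul_ite, mul_one, mul_zero]
  rw [sum_ite_mem, hpair, sum_pair hne]

lemma ind_injective : Function.Injective (ind : Finset (V × V) → V × V → ℝ) := by
  intro S T h
  ext x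
  have hx := congrFun h x
  by_cases hS : x ∈ S <;> by_cases hT : x ∈ T <;> simp_all [ind]

variable [Fintype V] {D D' S : Finset (V × V)} {d : V → ℤ}

lemma IsFlow.exists_cheaper_of_pair (hE : ∀ e, e ∈ E ↔ drev e ∈ E)
    (hw : ∀ e ∈ E, 0 < w e) (he : e ∈ E) (hne : e ≠ drev e) (hf : IsFlow E D d f)
    {c : ℝ} (hc : 0 < c) (hfe : f e = c) (hfre : f (drev e) = c) :
    ∃ g, IsFlow E (psub D e) d g ∧ flowCost E w g < flowCost E w f := by
  refine ⟨_, hf.sub_pair hE hfe hfre, ?_⟩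
  have hre := (hE e).mp he
  rw [flowCost_sub, flowCost_smul, flowCost_ind_pair he hre hne]
  have := hw e he
  have := hw (drev e) hre
  nlinarith

lemma IsMinCostFlow.drev_notMem (hE : ∀ e, e ∈ E ↔ drev e ∈ E) (hw : ∀ e ∈ E, 0 < w e)
    (he : e ∈ E) (hne : e ≠ drev e) (hmc : IsMinCostFlow E D d w (ind S)) (heS : e ∈ S) :
    drev e ∉ S := by
  intro hreS
  obtain ⟨g, hg, hlt⟩ := hmc.1.exists_cheaper_of_pair hE hw he hne one_pos
    (by simp [ind, heS]) (by simp [ind, hreS])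
  exact (hmc.2 g (hg.mono sdiff_subset)).not_gt hlt

lemma IsMinCostFlow.mem_of_flowCost_lt (hmc : IsMinCostFlow E D d w f)
    (hS : IsFlow E D' d (ind S)) (hD' : ∀ x ∈ D', x ∉ D → x = e)
    (hlt : flowCost E w (ind S) < flowCost E w f) : e ∈ S := by
  by_contra heS
  have hSD : IsFlow E D d (ind S) :=
    hS.restrict fun x hx hxD => by simp [ind, hD' x hx hxD ▸ heS]
  exact (hmc.2 _ hSD).not_gt hlt

end Cost

section MinCost

variable {V : Type*} [Fintype V] [DecidableEq V] {E D D' : Finset (V × V)} {d : V → ℤ}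
  {w : V × V → ℝ} {A : Finset (V × V) → Finset (V × V)} {e : V × V}

lemma GoodA.eq_of_isMinCostFlow (hA : GoodA E d w A) (hD : D ⊆ E) (hDf : AdmitsFlow E D d)
    {S : Finset (V × V)} (hmc : IsMinCostFlow E D d w (ind S)) : A D = S :=
  ind_injective ((hA D hD hDf).2 _ hmc).symm

lemma GoodA.eq_of_subset_of_isFlow (hA : GoodA E d w A) (hD : D ⊆ E) (hDf : AdmitsFlow E D d)
    (hD' : D' ⊆ D) (hf : IsFlow E D' d (ind (A D))) : A D' = A D :=
  hA.eq_of_isMinCostFlow (hD'.trans hD) ⟨_, hf⟩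
    ⟨hf, fun g hg => (hA D hD hDf).1.2 g (hg.mono hD')⟩

lemma GoodA.flowCost_lt_of_subset (hA : GoodA E d w A) (hD' : D' ⊆ E) (hDD' : D ⊆ D')
    (hDf : AdmitsFlow E D d) (hne : A D' ≠ A D) :
    flowCost E w (ind (A D')) < flowCost E w (ind (A D)) := by
  have hmc := (hA D (hDD'.trans hD') hDf).1
  have hf' : IsFlow E D' d (ind (A D)) := hmc.1.mono hDD'
  have hmc' := (hA D' hD' ⟨_, hf'⟩).1
  refine (hmc'.2 _ hf').lt_of_ne fun heq => hne ?_
  exact hA.eq_of_isMinCostFlow hD' ⟨_, hf'⟩ ⟨hf', fun g hg => heq ▸ hmc'.2 g hg⟩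

lemma GoodA.aEq_oplus_of_drev_notMem (hA : GoodA E d w A) (hD : D ⊆ E)
    (hDf : AdmitsFlow E D d) (heD : e ∈ D) (hre : drev e ∉ A D) : AEq E d A D (oplus D e) := by
  have hf : IsFlow E (oplus D e) d (ind (A D)) :=
    (hA D hD hDf).1.1.restrict fun x _ hx => by
      obtain rfl : x = drev e := by by_contra h; exact hx (mem_oplus.mpr ⟨Or.inr ‹_›, h⟩)
      simp [ind, hre]
  exact ⟨hDf, ⟨_, hf⟩, (hA.eq_of_subset_of_isFlow hD hDf (oplus_subset_of_mem heD) hf).symm⟩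

lemma GoodA.aEq_oplus_of_mem_of_mem (hE : ∀ e, e ∈ E ↔ drev e ∈ E)
    (hw : ∀ e ∈ E, 0 < w e) (hA : GoodA E d w A) (hD : D ⊆ E) (hDf : AdmitsFlow E D d)
    (he : e ∈ E) (hne : e ≠ drev e) (heD : e ∈ D) (hreD : drev e ∈ D) :
    AEq E d A D (oplus D e) ∨ AEq E d A D (oplus D (drev e)) := by
  by_cases hre : drev e ∈ A D
  · have hmc := (hA D hD hDf).1
    have heA : drev (drev e) ∉ A D :=
      hmc.drev_notMem hE hw ((hE e).mp he) (by simpa using hne.symm) hre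
    exact Or.inr (hA.aEq_oplus_of_drev_notMem hD hDf hreD heA)
  · exact Or.inl (hA.aEq_oplus_of_drev_notMem hD hDf heD hre)

lemma GoodA.flowCost_lt_of_not_aEq_oplus (hA : GoodA E d w A) (hD : D ⊆ E)
    (hDf : AdmitsFlow E D d) (he : e ∈ E) (hreD : drev e ∉ D)
    (h : ¬ AEq E d A D (oplus D e)) :
    e ∈ A (oplus D e) ∧ flowCost E w (ind (A (oplus D e))) < flowCost E w (ind (A D)) := by
  have hsub : D ⊆ oplus D e := subset_oplus hreD
  have hadm : AdmitsFlow E (oplus D e) d := hDf.mono hsub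
  have hlt := hA.flowCost_lt_of_subset (oplus_subset he hD) hsub hDf
    fun heq => h ⟨hDf, hadm, heq.symm⟩
  refine ⟨(hA D hD hDf).1.mem_of_flowCost_lt (hA _ (oplus_subset he hD) hadm).1.1
    (fun x hx hxD => ?_) hlt, hlt⟩
  exact (mem_oplus.mp hx).1.resolve_right hxD

lemma GoodA.aEq_oplus_of_notMem_of_notMem (hE : ∀ e, e ∈ E ↔ drev e ∈ E)
    (hw : ∀ e ∈ E, 0 < w e) (hA : GoodA E d w A) (hD : D ⊆ E) (hDf : AdmitsFlow E D d)
    (he : e ∈ E) (hne : e ≠ drev e) (heD : e ∉ D) (hreD : drev e ∉ D) :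
    AEq E d A D (oplus D e) ∨ AEq E d A D (oplus D (drev e)) := by
  by_contra! h
  have hre := (hE e).mp he
  have heD' : drev (drev e) ∉ D := by simpa using heD
  obtain ⟨he₁, hlt₁⟩ := hA.flowCost_lt_of_not_aEq_oplus hD hDf he hreD h.1
  obtain ⟨hre₂, hlt₂⟩ := hA.flowCost_lt_of_not_aEq_oplus hD hDf hre heD' h.2
  have hf₁ := (hA _ (oplus_subset he hD) (hDf.mono (subset_oplus hreD))).1.1
  have hf₂ := (hA _ (oplus_subset hre hD) (hDf.mono (subset_oplus heD'))).1.1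
  have hre₁ : drev e ∉ A (oplus D e) := fun h => drev_notMem_oplus (hf₁.subset_of_ind h)
  have he₂ : e ∉ A (oplus D (drev e)) := fun h => by
    simpa using drev_notMem_oplus (hf₂.subset_of_ind h)
  have hf := hf₁.convex_combination hf₂ (a := 1 / 2) (b := 1 / 2) (by norm_num) (by norm_num)
    (by norm_num)
  obtain ⟨g, hg, hglt⟩ := hf.exists_cheaper_of_pair hE hw he hne (c := 1 / 2) (by norm_num)
    (by simp [ind, he₁, he₂]) (by simp [ind, hre₁, hre₂])
  have hgD : IsFlow E D d g := hg.mono fun x hx => by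
    simp only [psub, oplus, mem_sdiff, mem_union, mem_insert, mem_singleton] at hx
    tauto
  have := (hA D hD hDf).1.2 g hgD
  rw [flowCost_add, flowCost_smul, flowCost_smul] at hglt
  linarith

end MinCost

section Phi

variable {V : Type*} [Fintype V] [DecidableEq V] {E : Finset (V × V)} {d : V → ℤ}
  {w : V × V → ℝ} {A : Finset (V × V) → Finset (V × V)} {E' : Finset (V × V)} {e : V × V}
  {D : Finset (V × V)}

lemma aEq_self (hDf : AdmitsFlow E D d) : AEq E d A D D := ⟨hDf, hDf, rfl⟩

lemma AEq.trans {D₁ D₂ D₃ : Finset (V × V)} (h₁₂ : AEq E d A D₁ D₂)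
    (h₂₃ : AEq E d A D₂ D₃) : AEq E d A D₁ D₃ :=
  ⟨h₁₂.1, h₂₃.2.1, h₁₂.2.2.trans h₂₃.2.2⟩

theorem GoodA.aEq_oplus_or_aEq_oplus_drev (hE : ∀ e, e ∈ E ↔ drev e ∈ E)
    (hw : ∀ e ∈ E, 0 < w e) (hA : GoodA E d w A) (hD : D ⊆ E) (hDf : AdmitsFlow E D d)
    (he : e ∈ E) (hne : e ≠ drev e) :
    AEq E d A D (oplus D e) ∨ AEq E d A D (oplus D (drev e)) := by
  by_cases heD : e ∈ D <;> by_cases hreD : drev e ∈ D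
  · exact hA.aEq_oplus_of_mem_of_mem hE hw hD hDf he hne heD hreD
  · left
    rw [oplus_eq_self heD hreD]
    exact aEq_self hDf
  · right
    rw [oplus_eq_self hreD (by simpa using heD)]
    exact aEq_self hDf
  · exact hA.aEq_oplus_of_notMem_of_notMem hE hw hD hDf he hne heD hreD

variable (E d A E' e D) in
lemma phiE_eq_oplus_or :
    phiE E d A E' e D = oplus D e ∨ phiE E d A E' e D = oplus D (drev e) := by
  unfold phiE chi
  split_ifs <;> simp

lemma aEq_phiE (h : AEq E d A D (oplus D e) ∨ AEq E d A D (oplus D (drev e))) :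
    AEq E d A D (phiE E d A E' e D) := by
  unfold phiE chi
  split_ifs <;> simp_all

lemma phiE_subset (he : e ∈ E) (hre : drev e ∈ E) (hD : D ⊆ E) : phiE E d A E' e D ⊆ E := by
  rcases phiE_eq_oplus_or E d A E' e D with h | h <;> rw [h]
  exacts [oplus_subset he hD, oplus_subset hre hD]

lemma orientsPair_phiE_self (hne : e ≠ drev e) : OrientsPair (phiE E d A E' e D) e := by
  rcases phiE_eq_oplus_or E d A E' e D with h | h <;> rw [h]
  · exact orientsPair_oplus_self hne
  · exact orientsPair_drev.mp (orientsPair_oplus_self (by simpa using hne.symm))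

lemma OrientsPair.phiE {x : V × V} (hx : OrientsPair D x) (hne : e ≠ drev e) :
    OrientsPair (phiE E d A E' e D) x := by
  rcases phiE_eq_oplus_or E d A E' e D with h | h <;> rw [h]
  · exact hx.oplus hne
  · exact hx.oplus (by simpa using hne.symm)

end Phi

section Fold

variable {V : Type*} [Fintype V] [DecidableEq V] {E : Finset (V × V)} {d : V → ℤ}
  {w : V × V → ℝ} {A : Finset (V × V) → Finset (V × V)} {E' : Finset (V × V)}
  {l : List (V × V)}

lemma foldl_phiE_subset (hE : ∀ e, e ∈ E ↔ drev e ∈ E) (hl : ∀ e ∈ l, e ∈ E)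
    {D : Finset (V × V)} (hD : D ⊆ E) : l.foldl (fun D e => phiE E d A E' e D) D ⊆ E := by
  induction l generalizing D with
  | nil => exact hD
  | cons e t ih =>
    have he := hl e List.mem_cons_self
    exact ih (fun x hx => hl x (List.mem_cons_of_mem e hx)) (phiE_subset he ((hE e).mp he) hD)

lemma aEq_foldl_phiE (hE : ∀ e, e ∈ E ↔ drev e ∈ E) (hloop : ∀ e ∈ E, e ≠ drev e)
    (hw : ∀ e ∈ E, 0 < w e) (hA : GoodA E d w A) (hl : ∀ e ∈ l, e ∈ E)
    {D : Finset (V × V)} (hD : D ⊆ E) (hDf : AdmitsFlow E D d) :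
    AEq E d A D (l.foldl (fun D e => phiE E d A E' e D) D) := by
  induction l generalizing D with
  | nil => exact aEq_self hDf
  | cons e t ih =>
    have he := hl e List.mem_cons_self
    have hstep : AEq E d A D (phiE E d A E' e D) :=
      aEq_phiE (hA.aEq_oplus_or_aEq_oplus_drev hE hw hD hDf he (hloop e he))
    exact hstep.trans (ih (fun x hx => hl x (List.mem_cons_of_mem e hx))
      (phiE_subset he ((hE e).mp he) hD) hstep.2.1)

lemma orientsPair_foldl_phiE (hl : ∀ e ∈ l, e ≠ drev e) {D : Finset (V × V)} {x : V × V}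
    (hx : x ∈ l ∨ OrientsPair D x) :
    OrientsPair (l.foldl (fun D e => phiE E d A E' e D) D) x := by
  induction l generalizing D with
  | nil => simpa using hx
  | cons e t ih =>
    have hne := hl e List.mem_cons_self
    refine ih (fun y hy => hl y (List.mem_cons_of_mem e hy)) ?_
    rcases hx with hx | hx
    · rcases List.mem_cons.mp hx with rfl | hxt
      exacts [Or.inr (orientsPair_phiE_self hne), Or.inl hxt]
    · exact Or.inr (hx.phiE hne)

end Fold

theorem phi_maps_subgraphs_to_orientations_general
    {V : Type*} [Fintype V] [DecidableEq V]
    (E : Finset (V × V)) (hE_symm : ∀ e, e ∈ E ↔ drev e ∈ E)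
    (hE_ne : ∀ e ∈ E, e.1 ≠ e.2)
    (d : V → ℤ)
    (w : V × V → ℝ) (hw : ∀ e ∈ E, 0 < w e)
    (A : Finset (V × V) → Finset (V × V)) (hA : GoodA E d w A)
    (E' : Finset (V × V)) (hE' : IsOrientation E E')
    (l : List (V × V)) (hl : l.toFinset = E')
    (K : Finset (V × V)) (hK : IsSubgraph E K) (hKf : AdmitsFlow E K d) :
    IsOrientation E (l.foldl (fun D e => phiE E d A E' e D) K) ∧
    AdmitsFlow E (l.foldl (fun D e => phiE E d A E' e D) K) d ∧
    A (l.foldl (fun D e => phiE E d A E' e D) K) = A K := by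
  have hloop : ∀ e ∈ E, e ≠ drev e := fun e he => ne_drev_of_fst_ne (hE_ne e he)
  have hmem : ∀ e, e ∈ l ↔ e ∈ E' := fun e => by rw [← hl, List.mem_toFinset]
  have hlE : ∀ e ∈ l, e ∈ E := fun e he => hE'.1 ((hmem e).mp he)
  have hAEq := aEq_foldl_phiE (E' := E') hE_symm hloop hw hA hlE hK.1 hKf
  refine ⟨⟨foldl_phiE_subset hE_symm hlE hK.1, fun e he => ?_⟩, hAEq.2.1, hAEq.2.2.symm⟩
  have hl_ne : ∀ e ∈ l, e ≠ drev e := fun e he => hloop e (hlE e he)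
  by_cases heE' : e ∈ E'
  · exact orientsPair_foldl_phiE hl_ne (Or.inl ((hmem e).mpr heE'))
  · have hreE' : drev e ∈ E' := by simpa [heE'] using (hE'.2 e he).not
    exact orientsPair_drev.mp (orientsPair_foldl_phiE hl_ne (Or.inl ((hmem _).mpr hreE')))

theorem phi_maps_subgraphs_to_orientations
    {V : Type*} [Fintype V] [DecidableEq V]
    (E : Finset (V × V)) (hE_symm : ∀ e, e ∈ E ↔ drev e ∈ E)
    (hE_ne : ∀ e ∈ E, e.1 ≠ e.2)
    (d : V → ℤ) (hd : ∑ u : V, d u = 0)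
    (w : V × V → ℝ) (hw : ∀ e ∈ E, 0 < w e)
    (A : Finset (V × V) → Finset (V × V)) (hA : GoodA E d w A)
    (E' : Finset (V × V)) (hE' : IsOrientation E E')
    (l : List (V × V)) (hl_nd : l.Nodup) (hl : l.toFinset = E')
    (K : Finset (V × V)) (hK : IsSubgraph E K) (hKf : AdmitsFlow E K d) :
    IsOrientation E (l.foldl (fun D e => phiE E d A E' e D) K) ∧
    AdmitsFlow E (l.foldl (fun D e => phiE E d A E' e D) K) d ∧
    A (l.foldl (fun D e => phiE E d A E' e D) K) = A K :=
  phi_maps_subgraphs_to_orientations_general E hE_symm hE_ne d w hw A hA E' hE' l hl K hK hKf
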